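/- Let G and H be finite groups with |G| = |H|. Suppose that for every integer n with 1 ≤ n ≤ |G|, the sum over all n-tuples (χ₁,…,χₙ) of irreducible complex characters of G of the multiplicity of the trivial character in the product χ₁²·χ₂²⋯χₙ² equals the corresponding sum for H. Then the multiset of sizes of real conjugacy classes of G equals the multiset of sizes of real conjugacy classes of H. -/

import Mathlib

open scoped BigOperators Classical

noncomputable section

/-- `χ : G → ℂ` is an irreducible complex character of `G`, i.e. the character of some
simple (irreducible) finite-dimensional complex representation. -/
def IsIrrChar (G : Type) [Group G] (χ : G → ℂ) : Prop :=
  ∃ V : FDRep ℂ G, CategoryTheory.Simple V ∧ FDRep.character V = χ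

/-- The inner product `[α, β] = (1/|G|) ∑ g, α g * conj (β g)` of complex-valued
class functions on a finite group. -/
def charInner (G : Type) [Group G] [Fintype G] (α β : G → ℂ) : ℂ :=
  (Fintype.card G : ℂ)⁻¹ * ∑ g : G, α g * (starRingEnd ℂ) (β g)

/-- A conjugacy class is real if its elements are conjugate to their inverses. -/
def IsRealClass (G : Type) [Group G] (C : ConjClasses G) : Prop :=
  ∀ g ∈ C.carrier, IsConj g g⁻¹

/-- The multiset of sizes of the real conjugacy classes of a finite group. -/
def realClassSizes (G : Type) [Group G] [Fintype G] : Multiset ℕ :=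
  ((Finset.univ : Finset (ConjClasses G)).filter fun C => IsRealClass G C).val.map
    fun C => C.carrier.ncard


/-!
Write `S(t) = ∑_χ χ(t)²`. Column orthogonality gives `S(t) = |G| / |tᴳ|` when `t` is real and
`S(t) = 0` otherwise, and the total trivial multiplicity of `χ₁² ⋯ χₙ²` over all `n`-tuples is
`|G|⁻¹ ∑_t S(t)ⁿ = ∑_{C real} (|G| / |C|)ⁿ⁻¹`. So the hypothesis says that the multisets
`{|G| / |C| : C real}` for `G` and for `H` have the same power sums of all exponents below `|G|`.
Both live in the `|G|`-element set `{|G| / c : 1 ≤ c ≤ |G|}`, where Lagrange interpolation turns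
power sums into multiplicities.

Column orthogonality comes from completeness of the irreducible characters: if a class function
`f` is orthogonal to all of them, the central element `∑_g f(g) g⁻¹` of `ℂ[G]` acts on each simple
`ℂ[G]`-module as a scalar (Schur) of trace zero, hence kills the semisimple module `ℂ[G]`, so it
is zero.
-/

open CategoryTheory
open scoped MonoidAlgebra

theorem IsConj.inv {G : Type*} [Group G] {a b : G} (h : IsConj a b) : IsConj a⁻¹ b⁻¹ := by
  obtain ⟨c, rfl⟩ := isConj_iff.1 h
  exact isConj_iff.2 ⟨c, by group⟩

theorem isConj_inv_iff_isRealClass {G : Type} [Group G] (t : G) :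
    IsConj t t⁻¹ ↔ IsRealClass G (ConjClasses.mk t) := by
  refine ⟨fun ht g hg => ?_, fun h => h t ConjClasses.mem_carrier_mk⟩
  have hgt : IsConj g t :=
    ConjClasses.mk_eq_mk_iff_isConj.1 (ConjClasses.mem_carrier_iff_mk_eq.1 hg)
  exact (hgt.trans ht).trans hgt.symm.inv

theorem Finset.eq_zero_of_forall_sum_mul_pow_eq_zero {K : Type*} [Field K] [DecidableEq K]
    {D : Finset K} {w : K → K} (h : ∀ m < D.card, ∑ y ∈ D, w y * y ^ m = 0) {x : K}
    (hx : x ∈ D) : w x = 0 := by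
  set p := Lagrange.basis D id x
  have hdeg : p.natDegree < D.card := by
    rw [Lagrange.natDegree_basis (Set.injOn_id _) hx]
    exact Nat.sub_lt (card_pos.2 ⟨x, hx⟩) one_pos
  calc w x = ∑ y ∈ D, w y * p.eval y := by
        rw [sum_eq_single_of_mem x hx fun y hy hyx => by
          rw [show p.eval y = 0 from Lagrange.eval_basis_of_ne (v := id) hyx.symm hy, mul_zero],
          show p.eval x = 1 from Lagrange.eval_basis_self (Set.injOn_id _) hx, mul_one]
    _ = ∑ m ∈ range D.card, p.coeff m * ∑ y ∈ D, w y * y ^ m := by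
        simp only [Polynomial.eval_eq_sum_range' hdeg, mul_sum]
        rw [sum_comm]
        simp only [mul_left_comm]
    _ = 0 := sum_eq_zero fun m hm => by rw [h m (mem_range.1 hm), mul_zero]

theorem Multiset.eq_of_forall_sum_map_pow_eq {K : Type*} [Field K] [CharZero K] [DecidableEq K]
    {s t : Multiset K} (D : Finset K) (hs : ∀ x ∈ s, x ∈ D) (ht : ∀ x ∈ t, x ∈ D)
    (h : ∀ m < D.card, (s.map (· ^ m)).sum = (t.map (· ^ m)).sum) : s = t := by
  have hsum : ∀ u : Multiset K, (∀ x ∈ u, x ∈ D) →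
      ∀ m, (u.map (· ^ m)).sum = ∑ y ∈ D, (u.count y : K) * y ^ m := by
    intro u hu m
    rw [Finset.sum_multiset_map_count, Finset.sum_subset (fun y hy => hu y (mem_toFinset.1 hy))
      fun y _ hy => by rw [count_eq_zero.2 (mt mem_toFinset.2 hy), zero_smul]]
    simp [nsmul_eq_mul]
  ext x
  by_cases hx : x ∈ D
  · have := Finset.eq_zero_of_forall_sum_mul_pow_eq_zero
      (w := fun y => (s.count y : K) - t.count y) (fun m hm => by
        simp only [sub_mul, Finset.sum_sub_distrib, ← hsum s hs, ← hsum t ht, h m hm, sub_self]) hx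
    exact_mod_cast sub_eq_zero.1 this
  · rw [count_eq_zero.2 (mt (hs x) hx), count_eq_zero.2 (mt (ht x) hx)]

namespace MonoidAlgebra

variable {k G : Type*} [CommSemiring k] [Group G] [Fintype G]

def sumSmulOfInv (f : G → k) : k[G] := ∑ g, f g • of k G g⁻¹

theorem commute_of_sumSmulOfInv {f : G → k} (hf : ∀ h g, f (h * g * h⁻¹) = f g) (h : G) :
    Commute (of k G h) (sumSmulOfInv f) := by
  simp only [Commute, SemiconjBy, sumSmulOfInv, Finset.mul_sum, Finset.sum_mul, mul_smul_comm,
    smul_mul_assoc, ← map_mul]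
  refine Fintype.sum_equiv (MulAut.conj h).toEquiv _ _ fun g => ?_
  simp [← mul_assoc, hf]

theorem commute_sumSmulOfInv {f : G → k} (hf : ∀ h g, f (h * g * h⁻¹) = f g) (a : k[G]) :
    Commute a (sumSmulOfInv f) := by
  induction a using MonoidAlgebra.induction_on with
  | of g => exact commute_of_sumSmulOfInv hf g
  | add a b ha hb => exact ha.add_left hb
  | smul r a ha => exact ha.smul_left r

theorem coeff_sumSmulOfInv (f : G → k) (g : G) : (sumSmulOfInv f).coeff g⁻¹ = f g := by
  simp [sumSmulOfInv, coeff_sum, Finsupp.single_apply]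

end MonoidAlgebra

namespace Representation

open MonoidAlgebra

theorem trace_asAlgebraHom_sumSmulOfInv {k G V : Type*} [Field k] [Group G] [Fintype G]
    [AddCommGroup V] [Module k V] [FiniteDimensional k V] (ρ : Representation k G V)
    (f : G → k) :
    LinearMap.trace k V (ρ.asAlgebraHom (sumSmulOfInv f)) = ∑ g, f g * ρ.character g⁻¹ := by
  simp [sumSmulOfInv, character]

theorem asAlgebraHom_eq_zero_of_commute_of_trace_eq_zero {k G V : Type*} [Field k] [IsAlgClosed k]
    [CharZero k] [Monoid G] [AddCommGroup V] [Module k V] [FiniteDimensional k V]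
    (ρ : Representation k G V) [ρ.IsIrreducible] {z : k[G]} (hz : ∀ a, Commute a z)
    (htr : LinearMap.trace k V (ρ.asAlgebraHom z) = 0) : ρ.asAlgebraHom z = 0 := by
  let φ : IntertwiningMap ρ ρ := (ρ.asAlgebraHom z).intertwiningMap_of_isIntertwiningMap ρ ρ
    fun g v => by
      rw [← asAlgebraHom_of, ← Module.End.mul_apply, ← map_mul, ← (hz _).eq, map_mul]; rfl
  obtain ⟨c, hc⟩ := IsIrreducible.algebraMap_intertwiningMap_bijective_of_isAlgClosed.2 φ
  have hφ : ρ.asAlgebraHom z = c • LinearMap.id := congr_arg IntertwiningMap.toLinearMap hc.symm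
  have : Nontrivial V := IsSimpleModule.nontrivial k[G] ρ.asModule
  rw [hφ, map_smul, LinearMap.trace_id, smul_eq_mul, mul_eq_zero] at htr
  simp [hφ, htr.resolve_right (by exact_mod_cast Module.finrank_pos.ne')]

section OfModule'

variable {k G M : Type*} [Field k] [Monoid G] [AddCommGroup M] [Module k M] [Module k[G] M]
  [IsScalarTower k k[G] M]

theorem ofModule'_asAlgebraHom_apply (r : k[G]) (m : M) :
    (ofModule' M).asAlgebraHom r m = r • m := by
  simp [ofModule', asAlgebraHom]

def ofModule'AsModuleEquiv : (ofModule' (k := k) (G := G) M).asModule ≃ₗ[k[G]] M where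
  __ := (ofModule' (k := k) (G := G) M).asModuleEquiv
  map_smul' r m := by simp [ofModule'_asAlgebraHom_apply]

instance [IsSimpleModule k[G] M] : (ofModule' (k := k) (G := G) M).IsIrreducible :=
  (irreducible_iff_isSimpleModule_asModule _).2 (IsSimpleModule.congr ofModule'AsModuleEquiv)

end OfModule'

theorem IsIrreducible.isIrrChar {G : Type} [Group G] [Fintype G] {V : Type} [AddCommGroup V]
    [Module ℂ V] [FiniteDimensional ℂ V] (ρ : Representation ℂ G V) [ρ.IsIrreducible] :
    IsIrrChar G ρ.character := by
  have : Invertible (Nat.card G : ℂ) := invertibleOfNonzero (NeZero.ne _)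
  refine ⟨FDRep.of ρ, ?_, rfl⟩
  rw [FDRep.simple_iff_char_is_norm_one]
  have h := char_orthonormal ρ ρ
  rw [if_pos ⟨Equiv.refl ρ⟩, inv_mul_eq_one₀ (NeZero.ne _)] at h
  exact h.symm

end Representation

theorem FDRep.sum_char_mul_char_inv {G : Type} [Group G] [Fintype G] (V W : FDRep ℂ G)
    [Simple V] [Simple W] :
    ∑ g, V.character g * W.character g⁻¹ =
      if Nonempty (V ≅ W) then (Fintype.card G : ℂ) else 0 := by
  have h := char_orthonormal V W
  rw [Nat.card_eq_fintype_card, inv_mul_eq_iff_eq_mul₀ (by simp)] at h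
  simp [h]

namespace IsIrrChar

variable {G : Type} [Group G] {χ ψ : G → ℂ}

theorem map_conj (hχ : IsIrrChar G χ) (h g : G) : χ (h * g * h⁻¹) = χ g := by
  obtain ⟨V, -, rfl⟩ := hχ
  exact FDRep.char_conj V g h

theorem eq_of_isConj (hχ : IsIrrChar G χ) {a b : G} (hab : IsConj a b) : χ a = χ b := by
  obtain ⟨c, rfl⟩ := isConj_iff.1 hab
  exact (hχ.map_conj c a).symm

theorem sum_mul_inv [Fintype G] (hχ : IsIrrChar G χ) (hψ : IsIrrChar G ψ) :
    ∑ g, χ g * ψ g⁻¹ = if χ = ψ then (Fintype.card G : ℂ) else 0 := by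
  obtain ⟨V, hV, rfl⟩ := hχ
  obtain ⟨W, hW, rfl⟩ := hψ
  rw [FDRep.sum_char_mul_char_inv]
  by_cases hVW : Nonempty (V ≅ W)
  · rw [if_pos hVW, if_pos (FDRep.char_iso hVW.some)]
  · rw [if_neg hVW, if_neg]
    intro hχψ
    have hVV := FDRep.sum_char_mul_char_inv V V
    have hWV := FDRep.sum_char_mul_char_inv V W
    rw [if_pos ⟨Iso.refl V⟩] at hVV
    rw [if_neg hVW, ← hχψ, hVV] at hWV
    simp at hWV

end IsIrrChar

section Characters

variable {G : Type} [Group G] [Fintype G]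

variable (G) in
theorem finite_setOf_isIrrChar : {χ : G → ℂ | IsIrrChar G χ}.Finite := by
  let B : LinearMap.BilinForm ℂ (G → ℂ) := LinearMap.mk₂ ℂ (fun α β => ∑ g, α g * β g⁻¹)
    (by simp [add_mul, Finset.sum_add_distrib]) (by simp [mul_assoc, Finset.mul_sum])
    (by simp [mul_add, Finset.sum_add_distrib]) (by simp [mul_left_comm, Finset.mul_sum])
  refine LinearIndependent.setFinite (LinearMap.linearIndependent_of_isOrthoᵢ (B := B) ?_ ?_)
  · intro χ ψ hne
    simp [B, Function.onFun, χ.2.sum_mul_inv ψ.2, Subtype.coe_injective.ne hne]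
  · intro χ
    simp [B, χ.2.sum_mul_inv χ.2]

variable (G) in
def irrChars : Finset (G → ℂ) := (finite_setOf_isIrrChar G).toFinset

theorem mem_irrChars {χ : G → ℂ} : χ ∈ irrChars G ↔ IsIrrChar G χ := by
  simp [irrChars]

open MonoidAlgebra Representation in
theorem sumSmulOfInv_smul_eq_zero {f : G → ℂ} (hf : ∀ h g, f (h * g * h⁻¹) = f g)
    (horth : ∀ χ, IsIrrChar G χ → ∑ g, f g * χ g⁻¹ = 0) {M : Type} [AddCommGroup M] [Module ℂ M]
    [Module ℂ[G] M] [IsScalarTower ℂ ℂ[G] M] [IsSimpleModule ℂ[G] M] [FiniteDimensional ℂ M]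
    (m : M) : sumSmulOfInv f • m = 0 := by
  have h := (ofModule' (k := ℂ) (G := G) M).asAlgebraHom_eq_zero_of_commute_of_trace_eq_zero
    (commute_sumSmulOfInv hf)
    (by rw [trace_asAlgebraHom_sumSmulOfInv]; exact horth _ (IsIrreducible.isIrrChar _))
  simpa [ofModule'_asAlgebraHom_apply] using congr($h m)

open MonoidAlgebra in
theorem eq_zero_of_forall_isIrrChar_sum_mul_inv_eq_zero {f : G → ℂ}
    (hf : ∀ h g, f (h * g * h⁻¹) = f g) (horth : ∀ χ, IsIrrChar G χ → ∑ g, f g * χ g⁻¹ = 0) :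
    f = 0 := by
  have hz := commute_sumSmulOfInv hf
  have hker : LinearMap.ker (LinearMap.toSpanSingleton ℂ[G] ℂ[G] (sumSmulOfInv f)) = ⊤ := by
    rw [eq_top_iff, ← IsSemisimpleModule.sSup_simples_eq_top, sSup_le_iff]
    intro S (hS : IsSimpleModule ℂ[G] S) x hx
    have : FiniteDimensional ℂ S := Module.Finite.trans ℂ[G] S
    have := congr_arg Subtype.val (sumSmulOfInv_smul_eq_zero hf horth (⟨x, hx⟩ : S))
    simpa [(hz x).eq] using this
  have hz0 : sumSmulOfInv f = 0 := by
    simpa using hker.ge (Submodule.mem_top (x := (1 : ℂ[G])))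
  funext g
  rw [← coeff_sumSmulOfInv f g, hz0]
  rfl

theorem card_filter_isConj (t : G) :
    (Finset.univ.filter (IsConj t)).card = (ConjClasses.mk t).carrier.ncard := by
  rw [← Set.ncard_coe_finset]
  congr 1
  ext g
  simp only [Finset.coe_filter, Finset.mem_univ, true_and, Set.mem_ofPred_eq,
    ConjClasses.mem_carrier_iff_mk_eq, ConjClasses.mk_eq_mk_iff_isConj]
  exact isConj_comm

theorem ncard_carrier_pos (C : ConjClasses G) : 0 < C.carrier.ncard := by
  obtain ⟨t, rfl⟩ := ConjClasses.mk_surjective C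
  exact (Set.ncard_pos (Set.toFinite _)).2 ⟨t, ConjClasses.mem_carrier_mk⟩

theorem sum_irrChars_mul (t g : G) : ∑ χ ∈ irrChars G, χ t * χ g =
    if IsConj t g⁻¹ then (Fintype.card G : ℂ) / (ConjClasses.mk t).carrier.ncard else 0 := by
  set c : ℂ := (Fintype.card G : ℂ) / (ConjClasses.mk t).carrier.ncard
  have hc : ((ConjClasses.mk t).carrier.ncard : ℂ) * c = Fintype.card G :=
    mul_div_cancel₀ _ (Nat.cast_ne_zero.2 (ncard_carrier_pos _).ne')
  let F : G → ℂ := fun g => ∑ χ ∈ irrChars G, χ t * χ g - if IsConj t g⁻¹ then c else 0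
  have hF : ∀ h g, F (h * g * h⁻¹) = F g := by
    intro h g
    have hconj : IsConj g⁻¹ (h * g * h⁻¹)⁻¹ := isConj_iff.2 ⟨h, by group⟩
    have : IsConj t (h * g * h⁻¹)⁻¹ ↔ IsConj t g⁻¹ :=
      ⟨fun ht => ht.trans hconj.symm, fun ht => ht.trans hconj⟩
    simp only [F, this]
    congr 1
    exact Finset.sum_congr rfl fun χ hχ => by rw [(mem_irrChars.1 hχ).map_conj]
  have hForth : ∀ ψ, IsIrrChar G ψ → ∑ g, F g * ψ g⁻¹ = 0 := by
    intro ψ hψ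
    have h1 : ∑ g, (∑ χ ∈ irrChars G, χ t * χ g) * ψ g⁻¹ = ψ t * Fintype.card G := by
      simp_rw [Finset.sum_mul, mul_assoc]
      rw [Finset.sum_comm]
      simp_rw [← Finset.mul_sum]
      rw [Finset.sum_congr rfl fun χ hχ => by rw [(mem_irrChars.1 hχ).sum_mul_inv hψ]]
      simp [mem_irrChars.2 hψ]
    have h2 : ∑ g, (if IsConj t g⁻¹ then c else 0) * ψ g⁻¹ = ψ t * Fintype.card G := by
      rw [← Equiv.sum_comp (Equiv.inv G)]
      simp only [Equiv.inv_apply, inv_inv, ite_mul, zero_mul]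
      rw [← Finset.sum_filter, Finset.sum_congr rfl fun g hg => by
        rw [hψ.eq_of_isConj (Finset.mem_filter.1 hg).2.symm]]
      rw [Finset.sum_const, card_filter_isConj, nsmul_eq_mul, ← hc]
      ring
    simp only [F, sub_mul, Finset.sum_sub_distrib, h1, h2, sub_self]
  exact sub_eq_zero.1 (congr_fun (eq_zero_of_forall_isIrrChar_sum_mul_inv_eq_zero hF hForth) g)

theorem sum_irrChars_sq (t : G) : ∑ χ ∈ irrChars G, χ t ^ 2 =
    if IsConj t t⁻¹ then (Fintype.card G : ℂ) / (ConjClasses.mk t).carrier.ncard else 0 := by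
  simpa [sq] using sum_irrChars_mul t t

theorem sum_comp_conjClassesMk {M : Type*} [AddCommMonoid M] (φ : ConjClasses G → M) :
    ∑ t, φ (ConjClasses.mk t) = ∑ C, C.carrier.ncard • φ C := by
  rw [← Finset.sum_fiberwise Finset.univ ConjClasses.mk]
  refine Finset.sum_congr rfl fun C _ => ?_
  rw [Finset.sum_congr rfl fun t ht => by rw [(Finset.mem_filter.1 ht).2], Finset.sum_const,
    ← Set.ncard_coe_finset]
  congr 3
  ext t
  simp [ConjClasses.mem_carrier_iff_mk_eq]

theorem mem_Icc_of_mem_realClassSizes {c : ℕ} (hc : c ∈ realClassSizes G) :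
    c ∈ Finset.Icc 1 (Fintype.card G) := by
  obtain ⟨C, -, rfl⟩ := Multiset.mem_map.1 hc
  refine Finset.mem_Icc.2 ⟨ncard_carrier_pos C, ?_⟩
  simpa [Set.ncard_univ] using Set.ncard_le_ncard (Set.subset_univ C.carrier)

theorem finsum_charInner_one_prod_sq (n : ℕ) :
    ∑ᶠ χs ∈ {χs : Fin n → G → ℂ | ∀ i, IsIrrChar G (χs i)}, charInner G 1 (∏ i, χs i ^ 2) =
      (Fintype.card G : ℂ)⁻¹ * ∑ t, starRingEnd ℂ (∑ χ ∈ irrChars G, χ t ^ 2) ^ n := by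
  have hset : {χs : Fin n → G → ℂ | ∀ i, IsIrrChar G (χs i)} =
      ↑(Fintype.piFinset fun _ : Fin n => irrChars G) := by
    ext χs
    simp [mem_irrChars]
  rw [hset, finsum_mem_coe_finset]
  simp only [charInner, Pi.one_apply, one_mul, Finset.prod_apply, map_prod, ← Finset.mul_sum]
  rw [Finset.sum_comm]
  congr 1
  refine Finset.sum_congr rfl fun t _ => ?_
  rw [map_sum, ← Fin.prod_const, Finset.prod_univ_sum]
  simp

theorem sum_starRingEnd_sum_irrChars_sq_pow_succ (n : ℕ) :
    ∑ t, starRingEnd ℂ (∑ χ ∈ irrChars G, χ t ^ 2) ^ (n + 1) =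
      Fintype.card G *
        ((realClassSizes G).map fun c : ℕ => ((Fintype.card G : ℂ) / c) ^ n).sum := by
  set N : ℂ := (Fintype.card G : ℂ)
  have hterm : ∀ t : G, starRingEnd ℂ (∑ χ ∈ irrChars G, χ t ^ 2) ^ (n + 1) =
      if IsRealClass G (ConjClasses.mk t) then (N / (ConjClasses.mk t).carrier.ncard) ^ (n + 1)
      else 0 := by
    intro t
    rw [sum_irrChars_sq, ← isConj_inv_iff_isRealClass]
    split_ifs <;> simp [N, map_div₀]
  rw [Finset.sum_congr rfl fun t _ => hterm t, sum_comp_conjClassesMk (fun C =>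
    if IsRealClass G C then (N / C.carrier.ncard) ^ (n + 1) else 0), realClassSizes,
    Multiset.map_map, Finset.sum_map_val, Finset.mul_sum, Finset.sum_filter]
  refine Finset.sum_congr rfl fun C _ => ?_
  have hC : (C.carrier.ncard : ℂ) ≠ 0 := Nat.cast_ne_zero.2 (ncard_carrier_pos C).ne'
  split_ifs
  · rw [nsmul_eq_mul, pow_succ', ← mul_assoc, mul_div_cancel₀ _ hC]
    rfl
  · simp

theorem finsum_charInner_one_prod_sq_succ (n : ℕ) :
    ∑ᶠ χs ∈ {χs : Fin (n + 1) → G → ℂ | ∀ i, IsIrrChar G (χs i)}, charInner G 1 (∏ i, χs i ^ 2) =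
      ((realClassSizes G).map fun c : ℕ => ((Fintype.card G : ℂ) / c) ^ n).sum := by
  rw [finsum_charInner_one_prod_sq, sum_starRingEnd_sum_irrChars_sq_pow_succ,
    inv_mul_cancel_left₀ (Nat.cast_ne_zero.2 Fintype.card_ne_zero)]

end Characters

/-- If `|G| = |H|` and, for every `1 ≤ n ≤ |G|`, the total multiplicity of the
trivial character in the products `χ₁² ⋯ χₙ²` over all `n`-tuples of irreducible characters
agrees for `G` and `H`, then `G` and `H` have the same multiset of real conjugacy class sizes. -/
theorem real_class_sizes_determined
    (G H : Type) [Group G] [Fintype G] [Group H] [Fintype H]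
    (hcard : Fintype.card G = Fintype.card H)
    (h : ∀ n : ℕ, 1 ≤ n → n ≤ Fintype.card G →
      (∑ᶠ χs ∈ {χs : Fin n → (G → ℂ) | ∀ i, IsIrrChar G (χs i)},
        charInner G 1 (∏ i, (χs i) ^ 2)) =
      ∑ᶠ χs ∈ {χs : Fin n → (H → ℂ) | ∀ i, IsIrrChar H (χs i)},
        charInner H 1 (∏ i, (χs i) ^ 2)) :
    realClassSizes G = realClassSizes H := by
  set N := Fintype.card G
  have hN : (N : ℂ) ≠ 0 := Nat.cast_ne_zero.2 Fintype.card_ne_zero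
  have hinj : Function.Injective fun c : ℕ => (N : ℂ) / c := fun a b hab => by
    simpa [div_eq_mul_inv, hN] using hab
  let D := (Finset.Icc 1 N).image fun c : ℕ => (N : ℂ) / c
  refine Multiset.map_injective hinj (Multiset.eq_of_forall_sum_map_pow_eq D ?_ ?_ fun m hm => ?_)
  · simpa [D] using fun c hc => ⟨c, Finset.mem_Icc.1 (mem_Icc_of_mem_realClassSizes hc), rfl⟩
  · simpa [D, hcard] using fun c hc => ⟨c, Finset.mem_Icc.1 (mem_Icc_of_mem_realClassSizes hc), rfl⟩
  · have hmN : m + 1 ≤ N := hm.trans_le (Finset.card_image_le.trans (by simp))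
    have := h (m + 1) (Nat.le_add_left 1 m) hmN
    rw [finsum_charInner_one_prod_sq_succ, finsum_charInner_one_prod_sq_succ, ← hcard] at this
    simpa [Multiset.map_map] using this
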